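/- For any real numbers f_1, …, f_K and any α ∈ ℝ, it holds that log(∑_{m=1}^K e^{f_m}) ≤ α + ∑_{m=1}^K log(1 + e^{f_m - α}). -/

import Mathlib

/-! Factor `e^α` out of `∑ e^{f m}`. For positive `x m` the expansion of `∏ (1 + x m)` contains
`1 + ∑ x m` among its nonnegative terms, so `log ∑ x m ≤ log ∏ (1 + x m) = ∑ log (1 + x m)`;
apply this to `x m = e^{f m - α}`. -/

open Finset Real

theorem Finset.one_add_sum_le_prod_one_add {ι R : Type*} [CommSemiring R] [PartialOrder R]
    [IsOrderedRing R] (s : Finset ι) {f : ι → R} (hf : ∀ i ∈ s, 0 ≤ f i) :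
    1 + ∑ i ∈ s, f i ≤ ∏ i ∈ s, (1 + f i) := by
  induction s using Finset.cons_induction with
  | empty => simp
  | cons a s _ ih =>
    rw [forall_mem_cons] at hf
    rw [sum_cons, prod_cons]
    calc 1 + (f a + ∑ i ∈ s, f i)
        ≤ 1 + (f a + ∑ i ∈ s, f i) + f a * ∑ i ∈ s, f i :=
          le_add_of_nonneg_right (mul_nonneg hf.1 (sum_nonneg hf.2))
      _ = (1 + f a) * (1 + ∑ i ∈ s, f i) := by ring
      _ ≤ (1 + f a) * ∏ i ∈ s, (1 + f i) := by
          gcongr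
          · exact add_nonneg zero_le_one hf.1
          · exact ih hf.2

theorem Real.log_sum_exp_eq_add_log_sum_exp_sub {ι : Type*} {s : Finset ι} (hs : s.Nonempty)
    (f : ι → ℝ) (α : ℝ) :
    log (∑ i ∈ s, exp (f i)) = α + log (∑ i ∈ s, exp (f i - α)) := by
  simp_rw [exp_sub, ← sum_div]
  rw [log_div (sum_pos (fun i _ => exp_pos _) hs).ne' (exp_pos α).ne', log_exp]
  ring

theorem Real.log_sum_le_sum_log_one_add {ι : Type*} {s : Finset ι} (hs : s.Nonempty)
    {x : ι → ℝ} (hx : ∀ i ∈ s, 0 < x i) :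
    log (∑ i ∈ s, x i) ≤ ∑ i ∈ s, log (1 + x i) := by
  rw [← log_prod fun i hi => (add_pos one_pos (hx i hi)).ne']
  refine log_le_log (sum_pos hx hs) ?_
  calc ∑ i ∈ s, x i ≤ 1 + ∑ i ∈ s, x i := le_add_of_nonneg_left zero_le_one
    _ ≤ ∏ i ∈ s, (1 + x i) := one_add_sum_le_prod_one_add s fun i hi => (hx i hi).le

/-- Bouchard's variational upper bound on the log-sum-exp function:
`log (∑ m, e^{f m}) ≤ α + ∑ m, log (1 + e^{f m - α})`. -/
theorem bouchard_logsumexp_bound {K : ℕ} (hK : 0 < K) (f : Fin K → ℝ) (α : ℝ) :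
    Real.log (∑ m, Real.exp (f m)) ≤ α + ∑ m, Real.log (1 + Real.exp (f m - α)) := by
  have hne : (univ : Finset (Fin K)).Nonempty := univ_nonempty_iff.mpr ⟨⟨0, hK⟩⟩
  rw [log_sum_exp_eq_add_log_sum_exp_sub hne f α]
  exact add_le_add_right (log_sum_le_sum_log_one_add hne fun m _ => exp_pos _) α
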